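/- Let x,y ∈ {0,1}^n, let t ≤ √n be a positive integer, and let S ⊆ [0..n] with 0 ∈ S. For every directed path τ from (0,0) to (n,0) in the grid graph G_{x,y} that visits only vertices with diagonal in [−t..t], there exists a directed path τ_S from (0,0) to (n,0) in the sampled grid graph G_S whose total weight is at most the total weight of τ. Consequently, if Δ_e(x,y) ≤ t then opt(G_S) ≤ Δ_e(x,y). -/

import Mathlib

/-!
A path in `G_{x,y}` confined to the band `[-t..t]` is simulated in `G_S` backwards from the
sink. The invariant: if the grid path at `(i, d)` has remaining weight `c` and `r` is the first
sample row at or after `i`, then every `(r, e)` with `|e| ≤ t` reaches the sink of `G_S` with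
weight at most `c + |e - d|`. Insertion edges of `G_S` climb up to diagonal `d`, and a deletion
edge costs exactly the one unit it moves down. When the grid path leaves row `r`, its deletion or
matching edge has a counterpart of the same weight in `G_S`; beyond the last sample row the final
edge of weight `|e|` suffices, because the grid path must still travel from diagonal `d` back
to `0`.

For the second part, the Levenshtein recursion yields a grid path of weight `Δ_e(x,y)`; since the
diagonal changes only along edges of weight `1`, that path stays in the band when `Δ_e(x,y) ≤ t`.
-/

namespace Stmt12

/-- Total weight of a list of vertices regarded as a walk. -/
def pathCost {V : Type*} (wt : V → V → ℕ) : List V → ℕ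
  | [] => 0
  | [_] => 0
  | a :: b :: l => wt a b + pathCost wt (b :: l)

/-- `l` is a directed path (walk) from `s` to `v` in the graph with edge relation `E`. -/
def IsPath {V : Type*} (E : V → V → Prop) (s v : V) (l : List V) : Prop :=
  l.head? = some s ∧ l.getLast? = some v ∧ l.Chain' E

/-- Shortest-path cost from `s` to `v`. -/
noncomputable def cost {V : Type*} (E : V → V → Prop) (wt : V → V → ℕ) (s v : V) : ℕ :=
  sInf { c | ∃ l : List V, IsPath E s v l ∧ pathCost wt l = c }

/-- Costs for the edit operations (ported from Mathlib's former `Levenshtein.Cost`). -/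
structure Levenshtein.Cost (α β δ : Type*) where
  delete : α → δ
  insert : β → δ
  substitute : α → β → δ

/-- Default costs: deletion, insertion 1; substitution 0 if equal, 1 otherwise
(ported from Mathlib's former `Levenshtein.defaultCost`). -/
def Levenshtein.defaultCost {α : Type*} [DecidableEq α] : Levenshtein.Cost α α ℕ where
  delete _ := 1
  insert _ := 1
  substitute a b := if a = b then 0 else 1

/-- Weighted edit distance (same value as Mathlib's former `levenshtein`). -/
def levenshtein {α β δ : Type*} [Add δ] [Min δ] [Zero δ] (C : Levenshtein.Cost α β δ) :
    List α → List β → δ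
  | [], [] => 0
  | x :: xs, [] => C.delete x + levenshtein C xs []
  | [], y :: ys => C.insert y + levenshtein C [] ys
  | x :: xs, y :: ys =>
    min (C.delete x + levenshtein C xs (y :: ys))
      (min (C.insert y + levenshtein C (x :: xs) ys) (C.substitute x y + levenshtein C xs ys))

/-- The list `x_1 x_2 … x_n`. -/
def strList (n : ℕ) (x : ℤ → Bool) : List Bool :=
  (List.range n).map fun k => x ((k : ℤ) + 1)

/-- Edit (Levenshtein) distance `Δ_e(x,y)` between `x, y ∈ {0,1}^n`. -/
def editDist (n : ℕ) (x y : ℤ → Bool) : ℕ :=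
  levenshtein Levenshtein.defaultCost (strList n x) (strList n y)

/-- `S` contains an element larger than `i`. -/
def hasNext (S : Finset ℤ) (i : ℤ) : Prop := ∃ s ∈ S, i < s

instance (S : Finset ℤ) (i : ℤ) : Decidable (hasNext S i) :=
  inferInstanceAs (Decidable (∃ s ∈ S, i < s))

/-- The smallest element of `S` larger than `i` (junk value `0` if none). -/
def nxt (S : Finset ℤ) (i : ℤ) : ℤ := ((S.filter fun s => i < s).min).untopD 0

/-- Edges of the sampled grid graph `G_S` on vertices `(S × [-t..t]) ∪ {(n,0)}`:
from `(i_j, d)` with `i_j ∈ S` not the last row of `S`, a vertical edge to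
`(i_{j+1}, d)`, an insertion edge to `(i_j, d+1)` (when `d+1 ≤ t`), and a deletion
edge to `(i_{j+1}, d-1)` (when `-t ≤ d-1`); from the last row `(i_s, d)`, an edge
to the sink `(n, 0)`. -/
def sampEdge (n t : ℕ) (S : Finset ℤ) (u v : ℤ × ℤ) : Prop :=
  u.1 ∈ S ∧ -(t : ℤ) ≤ u.2 ∧ u.2 ≤ (t : ℤ) ∧
    ((hasNext S u.1 ∧
        (v = (nxt S u.1, u.2) ∨ (v = (u.1, u.2 + 1) ∧ u.2 + 1 ≤ (t : ℤ)) ∨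
          (v = (nxt S u.1, u.2 - 1) ∧ -(t : ℤ) ≤ u.2 - 1))) ∨
      (¬ hasNext S u.1 ∧ v = ((n : ℤ), 0)))

/-- Weights of the sampled grid graph: a vertical edge `(i_j, d) → (i_{j+1}, d)` has
weight `0` iff `1 ≤ i_j + 1 + d ≤ n` and `x_{i_j+1} = y_{i_j+1+d}`; insertion and
deletion edges have weight `1`; the final edges `(i_s, d) → (n, 0)` have weight `|d|`. -/
def sampWt (n t : ℕ) (x y : ℤ → Bool) (S : Finset ℤ) (u v : ℤ × ℤ) : ℕ :=
  if hasNext S u.1 then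
    (if v = (u.1, u.2 + 1) then 1
     else if v = (nxt S u.1, u.2) then
       (if 1 ≤ u.1 + 1 + u.2 ∧ u.1 + 1 + u.2 ≤ (n : ℤ) ∧ x (u.1 + 1) = y (u.1 + 1 + u.2)
        then 0 else 1)
     else 1)
  else u.2.natAbs

/-- `opt(G_S)`: minimum weight of a path from `(0,0)` to `(n,0)` in `G_S`. -/
noncomputable def opt (n t : ℕ) (x y : ℤ → Bool) (S : Finset ℤ) : ℕ :=
  cost (sampEdge n t S) (sampWt n t x y S) (0, 0) ((n : ℤ), 0)

/-- Vertices of the grid graph `G_{x,y}`: `[0..n] × [-n..n]`. -/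
def gridVertex (n : ℕ) (v : ℤ × ℤ) : Prop :=
  0 ≤ v.1 ∧ v.1 ≤ (n : ℤ) ∧ -(n : ℤ) ≤ v.2 ∧ v.2 ≤ (n : ℤ)

/-- Edges of the grid graph `G_{x,y}`: deletion edges `(i,d) → (i+1,d-1)`,
insertion edges `(i,d) → (i,d+1)`, and matching/substitution edges
`(i,d) → (i+1,d)` (the latter present when `1 ≤ i+1+d ≤ n`), all present only
when both endpoints are vertices. -/
def gridEdge (n : ℕ) (u v : ℤ × ℤ) : Prop :=
  gridVertex n u ∧ gridVertex n v ∧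
    (v = (u.1 + 1, u.2 - 1) ∨ v = (u.1, u.2 + 1) ∨
      (v = (u.1 + 1, u.2) ∧ 1 ≤ u.1 + 1 + u.2 ∧ u.1 + 1 + u.2 ≤ (n : ℤ)))

/-- Weights of the grid graph: matching/substitution edges have weight `0` iff
`x_{i+1} = y_{i+1+d}`; deletion and insertion edges have weight `1`. -/
def gridWt (n : ℕ) (x y : ℤ → Bool) (u v : ℤ × ℤ) : ℕ :=
  if v = (u.1 + 1, u.2) then (if x (u.1 + 1) = y (u.1 + 1 + u.2) then 0 else 1) else 1

section Reach

variable {V : Type*}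

def Reach (E : V → V → Prop) (wt : V → V → ℕ) (s v : V) (c : ℕ) : Prop :=
  ∃ l, IsPath E s v l ∧ pathCost wt l ≤ c

variable {E : V → V → Prop} {wt : V → V → ℕ} {s u v w : V} {a b c : ℕ}

lemma Reach.refl (v : V) : Reach E wt v v 0 :=
  ⟨[v], ⟨rfl, rfl, List.isChain_singleton v⟩, le_rfl⟩

lemma Reach.mono (h : Reach E wt s v a) (hab : a ≤ b) : Reach E wt s v b :=
  let ⟨l, hl, hla⟩ := h
  ⟨l, hl, hla.trans hab⟩

lemma Reach.cons (h : Reach E wt w v c) (he : E u w) : Reach E wt u v (wt u w + c) := by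
  obtain ⟨_ | ⟨w', l⟩, ⟨hhead, hlast, hchain⟩, hc⟩ := h
  · simp at hhead
  obtain rfl : w = w' := by simpa using hhead.symm
  exact ⟨u :: w :: l, ⟨rfl, by simpa using hlast, hchain.cons_cons he⟩, Nat.add_le_add_left hc _⟩

lemma Reach.min (ha : Reach E wt s v a) (hb : Reach E wt s v b) : Reach E wt s v (min a b) := by
  rcases le_total a b with h | h
  · rwa [min_eq_left h]
  · rwa [min_eq_right h]

lemma cost_le_of_reach (h : Reach E wt s v c) : cost E wt s v ≤ c := by
  obtain ⟨l, hl, hlc⟩ := h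
  exact (Nat.sInf_le ⟨l, hl, rfl⟩ : cost E wt s v ≤ pathCost wt l).trans hlc

lemma natAbs_sub_le_pathCost (f : V → ℤ) (hf : ∀ u w, E u w → (f w - f u).natAbs ≤ wt u w) :
    ∀ (u : V) (l : List V), (u :: l).IsChain E → ∀ v ∈ u :: l,
      (f v - f u).natAbs ≤ pathCost wt (u :: l)
  | u, [], _, v, hv => by simp_all
  | u, w :: l, hchain, v, hv => by
    rw [List.isChain_cons_cons] at hchain
    have huw := hf u w hchain.1
    rcases List.mem_cons.1 hv with rfl | hv
    · simp
    · have hwv := natAbs_sub_le_pathCost f hf w l hchain.2 v hv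
      change _ ≤ wt u w + pathCost wt (w :: l)
      omega

end Reach

lemma nxt_spec {S : Finset ℤ} {i : ℤ} (h : hasNext S i) :
    nxt S i ∈ S ∧ i < nxt S i ∧ ∀ s ∈ S, i < s → nxt S i ≤ s := by
  obtain ⟨s₀, hs₀, hi⟩ := h
  have hne : (S.filter (i < ·)).Nonempty := ⟨s₀, Finset.mem_filter.2 ⟨hs₀, hi⟩⟩
  have hnxt : nxt S i = (S.filter (i < ·)).min' hne := by
    rw [nxt, ← Finset.coe_min' hne]; rfl
  obtain ⟨hmem, hlt⟩ := Finset.mem_filter.1 (Finset.min'_mem _ hne)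
  exact ⟨hnxt ▸ hmem, hnxt ▸ hlt,
    fun s hs his => hnxt ▸ Finset.min'_le _ _ (Finset.mem_filter.2 ⟨hs, his⟩)⟩

section Grid

variable {n : ℕ} {x y : ℤ → Bool}

abbrev gridReach (n : ℕ) (x y : ℤ → Bool) (u : ℤ × ℤ) (c : ℕ) : Prop :=
  Reach (gridEdge n) (gridWt n x y) u ((n : ℤ), 0) c

lemma gridEdge.natAbs_sub_le_gridWt {u v : ℤ × ℤ} (h : gridEdge n u v) :
    (v.2 - u.2).natAbs ≤ gridWt n x y u v := by
  obtain ⟨-, -, rfl | rfl | ⟨rfl, -⟩⟩ := h <;> simp [gridWt]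

lemma natAbs_snd_sub_le_of_isPath_gridEdge {u w : ℤ × ℤ} {l : List (ℤ × ℤ)}
    (hl : IsPath (gridEdge n) u w l) :
    ∀ v ∈ l, (v.2 - u.2).natAbs ≤ pathCost (gridWt n x y) l := by
  obtain ⟨hhead, -, hchain⟩ := hl
  obtain ⟨l, rfl⟩ : ∃ l', l = u :: l' := List.head?_eq_some_iff.1 hhead
  exact natAbs_sub_le_pathCost Prod.snd (fun _ _ h => h.natAbs_sub_le_gridWt) u l hchain

lemma strList_eq_map : strList n x = (List.range n).map fun k : ℕ => x (k + 1) := by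
  simp only [strList, List.bind_eq_flatMap, List.pure_def]
  rw [show (fun a : ℕ => [(a : ℤ)]) = pure ∘ Nat.cast from rfl, List.flatMap_pure_eq_map,
    List.map_map]
  rfl

lemma strList_length : (strList n x).length = n := by
  simp [strList_eq_map]

lemma strList_drop {p : ℕ} (hp : p < n) :
    (strList n x).drop p = x (p + 1) :: (strList n x).drop (p + 1) := by
  rw [List.drop_eq_getElem_cons (by rwa [strList_length])]
  simp [strList_eq_map]

lemma strList_drop_self : (strList n x).drop n = [] :=
  List.drop_of_length_le strList_length.le

variable {p q c : ℕ}

lemma gridReach_ins (hp : p ≤ n) (hq : q < n)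
    (h : gridReach n x y (p, ((q + 1 : ℕ) : ℤ) - p) c) :
    gridReach n x y (p, (q : ℤ) - p) (1 + c) := by
  have hedge : gridEdge n ((p : ℤ), (q : ℤ) - p) (p, ((q + 1 : ℕ) : ℤ) - p) :=
    ⟨⟨by omega, by omega, by omega, by omega⟩, ⟨by omega, by omega, by omega, by omega⟩,
      Or.inr (Or.inl (by push_cast; ring_nf))⟩
  simpa [gridWt] using h.cons hedge

lemma gridReach_del (hp : p < n) (hq : q ≤ n)
    (h : gridReach n x y ((p + 1 : ℕ), (q : ℤ) - (p + 1 : ℕ)) c) :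
    gridReach n x y (p, (q : ℤ) - p) (1 + c) := by
  have hedge : gridEdge n ((p : ℤ), (q : ℤ) - p) ((p + 1 : ℕ), (q : ℤ) - (p + 1 : ℕ)) :=
    ⟨⟨by omega, by omega, by omega, by omega⟩, ⟨by omega, by omega, by omega, by omega⟩,
      Or.inl (by push_cast; ring_nf)⟩
  simpa [gridWt] using h.cons hedge

lemma gridReach_sub (hp : p < n) (hq : q < n)
    (h : gridReach n x y ((p + 1 : ℕ), ((q + 1 : ℕ) : ℤ) - (p + 1 : ℕ)) c) :
    gridReach n x y (p, (q : ℤ) - p) ((if x (p + 1) = y (q + 1) then 0 else 1) + c) := by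
  have hedge : gridEdge n ((p : ℤ), (q : ℤ) - p) ((p + 1 : ℕ), ((q + 1 : ℕ) : ℤ) - (p + 1 : ℕ)) :=
    ⟨⟨by omega, by omega, by omega, by omega⟩, ⟨by omega, by omega, by omega, by omega⟩,
      Or.inr (Or.inr ⟨by push_cast; ring_nf, by omega, by omega⟩)⟩
  have hidx : (p : ℤ) + 1 + ((q : ℤ) - p) = q + 1 := by ring
  simpa [gridWt, hidx] using h.cons hedge

theorem gridReach_levenshtein (p q : ℕ) (hp : p ≤ n) (hq : q ≤ n) :
    gridReach n x y (p, (q : ℤ) - p)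
      (levenshtein Levenshtein.defaultCost ((strList n x).drop p) ((strList n y).drop q)) := by
  rcases hp.lt_or_eq with hp | hp <;> rcases hq.lt_or_eq with hq | hq
  · have hx := strList_drop (x := x) hp
    have hy := strList_drop (x := y) hq
    rw [hx, hy, levenshtein, ← hx, ← hy]
    exact (gridReach_del hp hq.le (gridReach_levenshtein (p + 1) q hp hq.le)).min
      ((gridReach_ins hp.le hq (gridReach_levenshtein p (q + 1) hp.le hq)).min
        (gridReach_sub hp hq (gridReach_levenshtein (p + 1) (q + 1) hp hq)))
  · subst q
    have h := gridReach_levenshtein (p + 1) n hp le_rfl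
    rw [strList_drop_self] at h
    rw [strList_drop hp, strList_drop_self, levenshtein]
    exact gridReach_del hp le_rfl h
  · subst p
    have h := gridReach_levenshtein n (q + 1) le_rfl hq
    rw [strList_drop_self] at h
    rw [strList_drop_self, strList_drop hq, levenshtein]
    exact gridReach_ins le_rfl hq h
  · subst p q
    rw [strList_drop_self, strList_drop_self, levenshtein]
    simpa using Reach.refl _
termination_by (n - p) + (n - q)

end Grid

section Sampled

variable {n t : ℕ} {x y : ℤ → Bool} {S : Finset ℤ} {r e : ℤ} {c : ℕ}

abbrev sampReach (n t : ℕ) (x y : ℤ → Bool) (S : Finset ℤ) (u : ℤ × ℤ) (c : ℕ) : Prop :=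
  Reach (sampEdge n t S) (sampWt n t x y S) u ((n : ℤ), 0) c

lemma sampReach_last (hr : r ∈ S) (hnx : ¬ hasNext S r) (he₁ : -(t : ℤ) ≤ e) (he₂ : e ≤ t) :
    sampReach n t x y S (r, e) e.natAbs := by
  simpa [sampWt, hnx] using
    (Reach.refl _).cons (wt := sampWt n t x y S) (u := (r, e)) ⟨hr, he₁, he₂, Or.inr ⟨hnx, rfl⟩⟩

section Step

variable (hr : r ∈ S) (hnx : hasNext S r)
include hr hnx

lemma sampReach_ins (he₁ : -(t : ℤ) ≤ e) (he₂ : e + 1 ≤ t)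
    (h : sampReach n t x y S (r, e + 1) c) : sampReach n t x y S (r, e) (1 + c) := by
  have hwt : sampWt n t x y S (r, e) (r, e + 1) = 1 := by simp [sampWt, hnx]
  simpa [hwt] using
    h.cons (u := (r, e)) ⟨hr, he₁, by omega, Or.inl ⟨hnx, Or.inr (Or.inl ⟨rfl, he₂⟩)⟩⟩

lemma sampReach_climb (k : ℕ) (he₁ : -(t : ℤ) ≤ e) (he₂ : e + k ≤ t)
    (h : sampReach n t x y S (r, e + k) c) : sampReach n t x y S (r, e) (k + c) := by
  induction k generalizing e with
  | zero => simpa using h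
  | succ k ih =>
    have hk : e + 1 + k = e + (k + 1 : ℕ) := by push_cast; ring
    have h' := ih (e := e + 1) (by omega) (by omega) (hk ▸ h)
    rw [show k + 1 + c = 1 + (k + c) by omega]
    exact sampReach_ins hr hnx he₁ (by omega) h'

lemma sampReach_del (he₁ : -(t : ℤ) ≤ e - 1) (he₂ : e ≤ t)
    (h : sampReach n t x y S (nxt S r, e - 1) c) : sampReach n t x y S (r, e) (1 + c) := by
  have hlt := (nxt_spec hnx).2.1
  have hwt : sampWt n t x y S (r, e) (nxt S r, e - 1) = 1 := by
    simp [sampWt, hnx, hlt.ne', Prod.ext_iff]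
  simpa [hwt] using
    h.cons (u := (r, e)) ⟨hr, by omega, he₂, Or.inl ⟨hnx, Or.inr (Or.inr ⟨rfl, he₁⟩)⟩⟩

lemma sampReach_vert (he₁ : -(t : ℤ) ≤ e) (he₂ : e ≤ t)
    (h : sampReach n t x y S (nxt S r, e) c) :
    sampReach n t x y S (r, e) (sampWt n t x y S (r, e) (nxt S r, e) + c) :=
  h.cons (u := (r, e)) ⟨hr, he₁, he₂, Or.inl ⟨hnx, Or.inl rfl⟩⟩

omit hr in
lemma sampWt_vert_eq_gridWt (h₁ : 1 ≤ r + 1 + e) (h₂ : r + 1 + e ≤ n) :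
    sampWt n t x y S (r, e) (nxt S r, e) = gridWt n x y (r, e) (r + 1, e) := by
  have hlt := (nxt_spec hnx).2.1
  simp [sampWt, gridWt, hnx, hlt.ne', h₁, h₂]

lemma sampReach_row {d d' : ℤ} {w : ℕ} (hd₁ : -(t : ℤ) ≤ d) (hd₂ : d ≤ t) (hdd' : d' ≤ d)
    (hw : d - d' ≤ w) (hbase : sampReach n t x y S (r, d) (w + c))
    (hnext : ∀ e, -(t : ℤ) ≤ e → e ≤ t → sampReach n t x y S (nxt S r, e) (c + (e - d').natAbs))
    (he₁ : -(t : ℤ) ≤ e) (he₂ : e ≤ t) : sampReach n t x y S (r, e) (w + c + (e - d).natAbs) := by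
  rcases lt_trichotomy e d with hlt | rfl | hgt
  · have hd : e + ((d - e).toNat : ℕ) = d := by omega
    exact (sampReach_climb hr hnx _ he₁ (by omega) (hd ▸ hbase)).mono (by omega)
  · simpa using hbase
  · exact (sampReach_del hr hnx (by omega) he₂ (hnext (e - 1) (by omega) (by omega))).mono
      (by omega)

lemma sampReach_of_gridEdge {d : ℤ} {b : ℤ × ℤ} (hab : gridEdge n (r, d) b) (hb : b.1 = r + 1)
    (hd₁ : -(t : ℤ) ≤ d) (hd₂ : d ≤ t) (hb₁ : -(t : ℤ) ≤ b.2)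
    (hnext : ∀ e, -(t : ℤ) ≤ e → e ≤ t → sampReach n t x y S (nxt S r, e) (c + (e - b.2).natAbs))
    (he₁ : -(t : ℤ) ≤ e) (he₂ : e ≤ t) :
    sampReach n t x y S (r, e) (gridWt n x y (r, d) b + c + (e - d).natAbs) := by
  obtain ⟨-, -, rfl | rfl | ⟨rfl, h₁, h₂⟩⟩ := hab <;> dsimp only at *
  · have hbase := sampReach_del hr hnx hb₁ hd₂ (by simpa using hnext (d - 1) hb₁ (by omega))
    have hwt : gridWt n x y (r, d) (r + 1, d - 1) = 1 := by simp [gridWt]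
    rw [hwt]
    exact sampReach_row hr hnx hd₁ hd₂ (by omega) (by omega) hbase hnext he₁ he₂
  · simp at hb
  · have hbase := sampReach_vert hr hnx hd₁ hd₂ (by simpa using hnext d hd₁ hd₂)
    rw [sampWt_vert_eq_gridWt hnx h₁ h₂] at hbase
    exact sampReach_row hr hnx hd₁ hd₂ le_rfl (by omega) hbase hnext he₁ he₂

end Step

theorem sampReach_of_isPath (hS : ∀ s ∈ S, s ≤ n) :
    ∀ (l : List (ℤ × ℤ)) (u : ℤ × ℤ) (r : ℤ), IsPath (gridEdge n) u ((n : ℤ), 0) l →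
      (∀ v ∈ l, -(t : ℤ) ≤ v.2 ∧ v.2 ≤ t) → r ∈ S → u.1 ≤ r → (∀ s ∈ S, u.1 ≤ s → r ≤ s) →
      ∀ e, -(t : ℤ) ≤ e → e ≤ t →
        sampReach n t x y S (r, e) (pathCost (gridWt n x y) l + (e - u.2).natAbs)
  | [], _, _, hl, _, _, _, _, _, _, _ => by simp [IsPath] at hl
  | u' :: l, (i, d), r, hl, hband, hr, hir, hmin, e, he₁, he₂ => by
    obtain rfl : u' = (i, d) := by simpa using hl.1
    by_cases hnx : hasNext S r
    swap
    · have hsink := natAbs_snd_sub_le_of_isPath_gridEdge (x := x) (y := y) hl _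
        (List.mem_of_getLast? hl.2.1)
      exact (sampReach_last hr hnx he₁ he₂).mono (by simp at hsink; omega)
    cases l with
    | nil =>
      obtain ⟨s, hs, hrs⟩ := hnx
      obtain ⟨rfl, -⟩ : i = n ∧ d = 0 := by simpa using hl.2.1
      exact absurd (hS s hs) (by omega)
    | cons b l =>
      obtain ⟨hab, hchain⟩ := List.isChain_cons_cons.1 hl.2.2
      have hbl : IsPath (gridEdge n) b ((n : ℤ), 0) (b :: l) :=
        ⟨rfl, by simpa using hl.2.1, hchain⟩
      have hbandb : ∀ v ∈ b :: l, -(t : ℤ) ≤ v.2 ∧ v.2 ≤ t :=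
        fun v hv => hband v (List.mem_cons_of_mem _ hv)
      have hib : i ≤ b.1 ∧ b.1 ≤ i + 1 := by
        obtain ⟨-, -, h | h | ⟨h, -⟩⟩ := hab <;> simp [h]
      change sampReach n t x y S (r, e)
        (gridWt n x y (i, d) b + pathCost (gridWt n x y) (b :: l) + (e - d).natAbs)
      by_cases hbr : b.1 ≤ r
      · have hwt := hab.natAbs_sub_le_gridWt (x := x) (y := y)
        exact (sampReach_of_isPath hS (b :: l) b r hbl hbandb hr hbr
          (fun s hs hbs => hmin s hs (by omega)) e he₁ he₂).mono (by simp at hwt; omega)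
      · obtain rfl : r = i := by omega
        obtain ⟨hnS, hnlt, hnmin⟩ := nxt_spec hnx
        have hnext := sampReach_of_isPath hS (b :: l) b (nxt S r) hbl hbandb hnS (by omega)
          (fun s hs hbs => hnmin s hs (by omega))
        have hi := hband _ List.mem_cons_self
        have hb := hbandb b List.mem_cons_self
        exact sampReach_of_gridEdge hr hnx hab (by omega) hi.1 hi.2 hb.1 hnext he₁ he₂

end Sampled

theorem stmt12_general (n t : ℕ) (x y : ℤ → Bool) (S : Finset ℤ) (hS0 : (0 : ℤ) ∈ S)
    (hSsub : ∀ s ∈ S, 0 ≤ s ∧ s ≤ (n : ℤ)) :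
    (∀ l : List (ℤ × ℤ), IsPath (gridEdge n) (0, 0) ((n : ℤ), 0) l →
      (∀ v ∈ l, -(t : ℤ) ≤ v.2 ∧ v.2 ≤ (t : ℤ)) →
      ∃ lS : List (ℤ × ℤ), IsPath (sampEdge n t S) (0, 0) ((n : ℤ), 0) lS ∧
        pathCost (sampWt n t x y S) lS ≤ pathCost (gridWt n x y) l) ∧
    (editDist n x y ≤ t → opt n t x y S ≤ editDist n x y) := by
  have hpaths : ∀ l : List (ℤ × ℤ), IsPath (gridEdge n) (0, 0) ((n : ℤ), 0) l →
      (∀ v ∈ l, -(t : ℤ) ≤ v.2 ∧ v.2 ≤ (t : ℤ)) →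
      sampReach n t x y S (0, 0) (pathCost (gridWt n x y) l) := fun l hl hband => by
    simpa using sampReach_of_isPath (fun s hs => (hSsub s hs).2) l (0, 0) 0 hl hband hS0 le_rfl
      (fun _ _ h => h) 0 (by omega) (by omega)
  refine ⟨hpaths, fun hdist => ?_⟩
  obtain ⟨l, hl, hlc⟩ :=
    gridReach_levenshtein (x := x) (y := y) 0 0 (Nat.zero_le n) (Nat.zero_le n)
  simp only [Nat.cast_zero, sub_zero, List.drop_zero] at hl hlc
  have hband : ∀ v ∈ l, -(t : ℤ) ≤ v.2 ∧ v.2 ≤ t := fun v hv => by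
    have := natAbs_snd_sub_le_of_isPath_gridEdge (x := x) (y := y) hl v hv
    unfold editDist at hdist
    omega
  exact cost_le_of_reach ((hpaths l hl hband).mono hlc)

theorem stmt12 (n t : ℕ) (ht : 1 ≤ t) (hsqrt : (t : ℝ) ≤ Real.sqrt n)
    (x y : ℤ → Bool) (S : Finset ℤ) (hS0 : (0 : ℤ) ∈ S)
    (hSsub : ∀ s ∈ S, 0 ≤ s ∧ s ≤ (n : ℤ)) :
    (∀ l : List (ℤ × ℤ), IsPath (gridEdge n) (0, 0) ((n : ℤ), 0) l →
      (∀ v ∈ l, -(t : ℤ) ≤ v.2 ∧ v.2 ≤ (t : ℤ)) →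
      ∃ lS : List (ℤ × ℤ), IsPath (sampEdge n t S) (0, 0) ((n : ℤ), 0) lS ∧
        pathCost (sampWt n t x y S) lS ≤ pathCost (gridWt n x y) l) ∧
    (editDist n x y ≤ t → opt n t x y S ≤ editDist n x y) :=
  stmt12_general n t x y S hS0 hSsub

end Stmt12
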